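/- arXiv:1410.0703 — 4 statements merged into one kernel-verified Lean document; each statement's English description precedes it below -/
import Mathlib

section
/- (Eigenvalue simulation.) Let H be a Hermitian N × N matrix over ℂ and let H_sim be a Hermitian M × M matrix over ℂ with M ≥ N. Suppose (H_sim, E) simulates H with error (η, ε) for some isometry E : ℂ^N → ℂ^M. Then for every 1 ≤ i ≤ N, the i-th smallest eigenvalue of H_sim (counted with multiplicity) differs from the i-th smallest eigenvalue of H by at most ε. -/
open Matrix

noncomputable def opNorm {m n : Type*} [Fintype m] [Fintype n] [DecidableEq n]
    (A : Matrix m n ℂ) : ℝ :=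
  ‖LinearMap.toContinuousLinearMap (Matrix.toEuclideanLin A)‖

noncomputable def vecNorm {n : Type*} [Fintype n] (x : n → ℂ) : ℝ :=
  Real.sqrt (∑ i, ‖x i‖ ^ 2)

/-- `lam` is the list of eigenvalues of `A` in nondecreasing order, counted with
multiplicity: it is monotone and there is an orthonormal eigenbasis realizing it. -/
def IsSortedSpectrum {M : ℕ} (A : Matrix (Fin M) (Fin M) ℂ) (lam : Fin M → ℝ) : Prop :=
  Monotone lam ∧ ∃ w : Fin M → (Fin M → ℂ),
    (∀ i j, star (w i) ⬝ᵥ w j = if i = j then 1 else 0) ∧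
    ∀ i, A.mulVec (w i) = (lam i : ℂ) • w i

/-- `(Hsim, E)` simulates `H` with error `(η, ε)`: there is an isometry `Et` whose image
is spanned by `N` orthonormal eigenvectors of `Hsim` with the `N` smallest eigenvalues
(S1), with `‖H - Etᴴ Hsim Et‖ ≤ ε` (S2) and `‖E - Et‖ ≤ η` (S3). -/
def Simulates {N M : ℕ} (hNM : N ≤ M) (Hsim : Matrix (Fin M) (Fin M) ℂ)
    (E : Matrix (Fin M) (Fin N) ℂ) (H : Matrix (Fin N) (Fin N) ℂ) (η ε : ℝ) : Prop :=
  ∃ (lam : Fin M → ℝ) (Et : Matrix (Fin M) (Fin N) ℂ) (v : Fin N → (Fin M → ℂ)),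
    IsSortedSpectrum Hsim lam ∧
    Etᴴ * Et = 1 ∧
    (∀ i j, star (v i) ⬝ᵥ v j = if i = j then 1 else 0) ∧
    (∀ i, Hsim.mulVec (v i) = (lam (Fin.castLE hNM i) : ℂ) • v i) ∧
    LinearMap.range Et.mulVecLin = Submodule.span ℂ (Set.range v) ∧
    opNorm (H - Etᴴ * Hsim * Et) ≤ ε ∧
    opNorm (E - Et) ≤ η

/-!
By (S1) the image of `Ẽ` is spanned by eigenvectors `v₁, …, v_N` of `H_sim` for `λ₁, …, λ_N`,
so the vectors `Ẽ† vᵢ` are orthonormal eigenvectors of the compression `K = Ẽ† H_sim Ẽ` and the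
sorted spectrum of `K` is `λ₁, …, λ_N`. Weyl's inequality `|λᵢ(H) - λᵢ(K)| ≤ ‖H - K‖ ≤ ε`
finishes the proof; it also shows that a sorted spectrum is unique, so that `λᵢ` is the `i`-th
eigenvalue however the eigenbasis of `H_sim` is chosen.
-/

open scoped InnerProductSpace

section Orthonormal

variable {ι E : Type*} [Fintype ι] [NormedAddCommGroup E] [InnerProductSpace ℂ E]
  {b : ι → E} {T : E →ₗ[ℂ] E} {μ : ι → ℝ}

theorem Orthonormal.re_inner_sum_map_sum (hb : Orthonormal ℂ b)
    (hT : ∀ j, T (b j) = (μ j : ℂ) • b j) (c : ι → ℂ) :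
    (⟪∑ j, c j • b j, T (∑ j, c j • b j)⟫_ℂ).re = ∑ j, μ j * ‖c j‖ ^ 2 := by
  have hTsum : T (∑ j, c j • b j) = ∑ j, (c j * μ j) • b j := by
    simp only [map_sum, map_smul, hT, smul_smul]
  rw [hTsum, hb.inner_sum, Complex.re_sum]
  refine Finset.sum_congr rfl fun j _ => ?_
  rw [← mul_assoc, Complex.conj_mul', ← Complex.ofReal_pow, ← Complex.ofReal_mul,
    Complex.ofReal_re, mul_comm]

theorem Orthonormal.norm_sum_sq (hb : Orthonormal ℂ b) (c : ι → ℂ) :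
    ‖∑ j, c j • b j‖ ^ 2 = ∑ j, ‖c j‖ ^ 2 := by
  simpa [← inner_self_eq_norm_sq (𝕜 := ℂ)] using
    hb.re_inner_sum_map_sum (T := LinearMap.id) (μ := 1) (by simp) c

theorem Orthonormal.re_inner_map_self_le_of_mem_span (hb : Orthonormal ℂ b)
    (hT : ∀ j, T (b j) = (μ j : ℂ) • b j) {r : ℝ} (hμ : ∀ j, μ j ≤ r) {x : E}
    (hx : x ∈ Submodule.span ℂ (Set.range b)) :
    (⟪x, T x⟫_ℂ).re ≤ r * ‖x‖ ^ 2 := by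
  obtain ⟨c, rfl⟩ := (Submodule.mem_span_range_iff_exists_fun ℂ).mp hx
  rw [hb.re_inner_sum_map_sum hT, hb.norm_sum_sq, Finset.mul_sum]
  gcongr with j
  exact hμ j

theorem Orthonormal.le_re_inner_map_self_of_mem_span (hb : Orthonormal ℂ b)
    (hT : ∀ j, T (b j) = (μ j : ℂ) • b j) {r : ℝ} (hμ : ∀ j, r ≤ μ j) {x : E}
    (hx : x ∈ Submodule.span ℂ (Set.range b)) :
    r * ‖x‖ ^ 2 ≤ (⟪x, T x⟫_ℂ).re := by
  obtain ⟨c, rfl⟩ := (Submodule.mem_span_range_iff_exists_fun ℂ).mp hx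
  rw [hb.re_inner_sum_map_sum hT, hb.norm_sum_sq, Finset.mul_sum]
  gcongr with j
  exact hμ j

end Orthonormal

theorem exists_ne_zero_mem_span_Ici_mem_span_Iic {K V : Type*} [Field K] [AddCommGroup V]
    [Module K V] [FiniteDimensional K V] {n : ℕ} (hV : Module.finrank K V ≤ n)
    {b b' : Fin n → V} (hb : LinearIndependent K b) (hb' : LinearIndependent K b')
    (i : Fin n) :
    ∃ x ≠ 0, x ∈ Submodule.span K (Set.range fun j : Set.Ici i => b j) ∧
      x ∈ Submodule.span K (Set.range fun j : Set.Iic i => b' j) := by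
  have hrank : Module.finrank K V <
      Module.finrank K (Submodule.span K (Set.range fun j : Set.Ici i => b j)) +
        Module.finrank K (Submodule.span K (Set.range fun j : Set.Iic i => b' j)) := by
    rw [finrank_span_eq_card (b := fun j : Set.Ici i => b j) (hb.comp _ Subtype.val_injective),
      finrank_span_eq_card (b := fun j : Set.Iic i => b' j) (hb'.comp _ Subtype.val_injective),
      Fintype.card_Ici, Fintype.card_Iic, Fin.card_Ici, Fin.card_Iic]
    omega
  by_contra! hdisj
  refine (Submodule.finrank_add_finrank_le_of_disjoint
    (Submodule.disjoint_def.mpr fun x hx hx' => ?_)).not_gt hrank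
  by_contra hx0
  exact hdisj x hx0 hx hx'

theorem orthonormal_toLp_iff {ι n : Type*} [Fintype n] [DecidableEq ι] {w : ι → n → ℂ} :
    Orthonormal ℂ (fun i => WithLp.toLp 2 (w i)) ↔
      ∀ i j, star (w i) ⬝ᵥ w j = if i = j then 1 else 0 := by
  simp only [orthonormal_iff_ite, EuclideanSpace.inner_toLp_toLp, dotProduct_comm (w _)]

theorem re_inner_toEuclideanLin_le_opNorm {n : Type*} [Fintype n] [DecidableEq n]
    (A : Matrix n n ℂ) (x : EuclideanSpace ℂ n) :
    (⟪x, toEuclideanLin A x⟫_ℂ).re ≤ opNorm A * ‖x‖ ^ 2 :=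
  calc (⟪x, toEuclideanLin A x⟫_ℂ).re
      ≤ ‖x‖ * ‖toEuclideanLin A x‖ := re_inner_le_norm (𝕜 := ℂ) _ _
    _ ≤ ‖x‖ * (opNorm A * ‖x‖) := by
      gcongr
      exact (LinearMap.toContinuousLinearMap (toEuclideanLin A)).le_opNorm x
    _ = opNorm A * ‖x‖ ^ 2 := by ring

theorem opNorm_zero {m n : Type*} [Fintype m] [Fintype n] [DecidableEq n] :
    opNorm (0 : Matrix m n ℂ) = 0 := by
  simp [opNorm]

theorem opNorm_sub_comm {m n : Type*} [Fintype m] [Fintype n] [DecidableEq n]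
    (A B : Matrix m n ℂ) : opNorm (A - B) = opNorm (B - A) := by
  simp only [opNorm, map_sub, norm_sub_rev]

theorem mul_conjTranspose_mulVec_of_mem_range {R m n : Type*} [CommSemiring R] [StarRing R]
    [Fintype m] [Fintype n] [DecidableEq n] {V : Matrix m n R} (hV : Vᴴ * V = 1) {y : m → R}
    (hy : y ∈ LinearMap.range V.mulVecLin) : (V * Vᴴ) *ᵥ y = y := by
  obtain ⟨u, rfl⟩ := hy
  rw [mulVecLin_apply, mulVec_mulVec, Matrix.mul_assoc, hV, Matrix.mul_one]

namespace IsSortedSpectrum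

variable {n : ℕ} {A B : Matrix (Fin n) (Fin n) ℂ} {a b : Fin n → ℝ}

theorem exists_orthonormal_eigenbasis (hA : IsSortedSpectrum A a) :
    ∃ u : Fin n → EuclideanSpace ℂ (Fin n),
      Orthonormal ℂ u ∧ ∀ i, toEuclideanLin A (u i) = (a i : ℂ) • u i := by
  obtain ⟨-, w, hw, heig⟩ := hA
  refine ⟨fun i => WithLp.toLp 2 (w i), orthonormal_toLp_iff.mpr hw, fun i => ?_⟩
  rw [Matrix.toLpLin_toLp, toLin'_apply, heig, WithLp.toLp_smul]

/-- One half of Weyl's inequality, by the Courant–Fischer argument: counting dimensions, some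
nonzero vector lies both in the span of the eigenvectors of `A` for `a i, …, a (n-1)` and in
the span of those of `B` for `b 0, …, b i`. -/
theorem le_add_opNorm_sub (hA : IsSortedSpectrum A a) (hB : IsSortedSpectrum B b)
    (i : Fin n) : a i ≤ b i + opNorm (A - B) := by
  obtain ⟨u, hu, hAu⟩ := hA.exists_orthonormal_eigenbasis
  obtain ⟨u', hu', hBu'⟩ := hB.exists_orthonormal_eigenbasis
  obtain ⟨x, hx0, hxA, hxB⟩ := exists_ne_zero_mem_span_Ici_mem_span_Iic (by simp)
    hu.linearIndependent hu'.linearIndependent i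
  have hlow : a i * ‖x‖ ^ 2 ≤ (⟪x, toEuclideanLin A x⟫_ℂ).re :=
    (hu.comp _ Subtype.val_injective).le_re_inner_map_self_of_mem_span (fun j => hAu j)
      (fun j => hA.1 j.2) hxA
  have hhigh : (⟪x, toEuclideanLin B x⟫_ℂ).re ≤ b i * ‖x‖ ^ 2 :=
    (hu'.comp _ Subtype.val_injective).re_inner_map_self_le_of_mem_span (fun j => hBu' j)
      (fun j => hB.1 j.2) hxB
  have hdiff := re_inner_toEuclideanLin_le_opNorm (A - B) x
  rw [map_sub, LinearMap.sub_apply, inner_sub_right, Complex.sub_re] at hdiff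
  have hx : 0 < ‖x‖ ^ 2 := by positivity
  exact le_of_mul_le_mul_right (by linarith) hx

theorem unique (ha : IsSortedSpectrum A a) (hb : IsSortedSpectrum A b) : a = b := by
  funext i
  have hab := ha.le_add_opNorm_sub hb i
  have hba := hb.le_add_opNorm_sub ha i
  rw [sub_self, opNorm_zero, add_zero] at hab hba
  exact le_antisymm hab hba

end IsSortedSpectrum

/-- Since `V * Vᴴ` fixes the range of `V`, the vectors `Vᴴ *ᵥ v i` are orthonormal eigenvectors
of `Vᴴ * A * V`. -/
theorem isSortedSpectrum_conjTranspose_mul_mul {m n : ℕ} {V : Matrix (Fin m) (Fin n) ℂ}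
    (hV : Vᴴ * V = 1) {A : Matrix (Fin m) (Fin m) ℂ} {v : Fin n → Fin m → ℂ} {μ : Fin n → ℝ}
    (hμ : Monotone μ) (hv : ∀ i j, star (v i) ⬝ᵥ v j = if i = j then 1 else 0)
    (heig : ∀ i, A *ᵥ v i = (μ i : ℂ) • v i)
    (hrange : LinearMap.range V.mulVecLin = Submodule.span ℂ (Set.range v)) :
    IsSortedSpectrum (Vᴴ * A * V) μ := by
  have hproj : ∀ i, (V * Vᴴ) *ᵥ v i = v i := fun i =>
    mul_conjTranspose_mulVec_of_mem_range hV (hrange ▸ Submodule.subset_span ⟨i, rfl⟩)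
  refine ⟨hμ, fun i => Vᴴ *ᵥ v i, fun i j => ?_, fun i => ?_⟩
  · rw [star_mulVec, conjTranspose_conjTranspose, ← dotProduct_mulVec, mulVec_mulVec,
      hproj, hv]
  · rw [mulVec_mulVec, Matrix.mul_assoc _ V, ← mulVec_mulVec, hproj, ← mulVec_mulVec, heig,
      mulVec_smul]

theorem eigenvalue_simulation_general {N M : ℕ} (hNM : N ≤ M)
    (H : Matrix (Fin N) (Fin N) ℂ)
    (Hsim : Matrix (Fin M) (Fin M) ℂ)
    (E : Matrix (Fin M) (Fin N) ℂ)
    (η ε : ℝ) (hsimul : Simulates hNM Hsim E H η ε)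
    (lamH : Fin N → ℝ) (lamS : Fin M → ℝ)
    (hlamH : IsSortedSpectrum H lamH) (hlamS : IsSortedSpectrum Hsim lamS) :
    ∀ i : Fin N, |lamS (Fin.castLE hNM i) - lamH i| ≤ ε := by
  obtain ⟨lam, Et, v, hspec, hEt, hv, heig, hrange, hnorm, -⟩ := hsimul
  have hK : IsSortedSpectrum (Etᴴ * Hsim * Et) (fun i => lam (Fin.castLE hNM i)) :=
    isSortedSpectrum_conjTranspose_mul_mul hEt
      (hspec.1.comp (Fin.strictMono_castLE hNM).monotone) hv heig hrange
  intro i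
  have hupper := hlamH.le_add_opNorm_sub hK i
  have hlower := hK.le_add_opNorm_sub hlamH i
  rw [opNorm_sub_comm] at hlower
  rw [hlamS.unique hspec, abs_le]
  constructor <;> linarith

/-- **Eigenvalue simulation** (Lemma 3.1): if `(Hsim, E)` simulates `H` with error
`(η, ε)` then the `i`-th smallest eigenvalues of `Hsim` and `H` differ by at most `ε`
for all `1 ≤ i ≤ N`. -/
theorem eigenvalue_simulation {N M : ℕ} (hNM : N ≤ M)
    (H : Matrix (Fin N) (Fin N) ℂ) (hH : H.IsHermitian)
    (Hsim : Matrix (Fin M) (Fin M) ℂ) (hsim : Hsim.IsHermitian)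
    (E : Matrix (Fin M) (Fin N) ℂ) (hE : Eᴴ * E = 1)
    (η ε : ℝ) (hsimul : Simulates hNM Hsim E H η ε)
    (lamH : Fin N → ℝ) (lamS : Fin M → ℝ)
    (hlamH : IsSortedSpectrum H lamH) (hlamS : IsSortedSpectrum Hsim lamS) :
    ∀ i : Fin N, |lamS (Fin.castLE hNM i) - lamH i| ≤ ε :=
  eigenvalue_simulation_general hNM H Hsim E η ε hsimul lamH lamS hlamH hlamS
end

section
/- (Ground state simulation.) There is an absolute constant C > 0 with the following property. Let H be a Hermitian N × N matrix with a nondegenerate smallest eigenvalue, with unit ground state |g⟩, and spectral gap δ > 0 between the smallest and second smallest eigenvalue. Suppose (H_sim, E) simulates H with error (η, ε) where 2ε < δ. Then the smallest eigenvalue of H_sim is also nondegenerate, and its unit ground state |g_sim⟩ can be chosen (by adjusting its phase) so that ‖ E|g⟩ − |g_sim⟩ ‖ ≤ η + C·ε/δ. -/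
open Matrix

/-!
Compressing `Hsim` by the isometry `Et` of (S1) gives the `N × N` matrix `Etᴴ Hsim Et`, whose
eigenvectors `Etᴴ vᵢ` carry the `N` smallest eigenvalues of `Hsim`, and by (S2) it is `ε`-close to
`H`. Weyl's inequality, obtained from Rayleigh quotients of a nonzero test vector in
`span {a₀, …, a_k} ∩ {b₀, …, b_{k-1}}ᗮ`, moves every eigenvalue by at most `ε`; hence the gap of
`Hsim` is at least `δ - 2ε > 0`. The compressed ground state `u` satisfies `‖(H - λ₀) u‖ ≤ 2ε`, so
the gap bounds the component of `u` orthogonal to `g` by `2ε / δ`; aligning the phase of `u` with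
`g` costs a factor `√2`, whence `C = 2√2`. Finally `‖E g - Et u‖ ≤ ‖(E - Et) g‖ + ‖g - u‖`.
-/

open RCLike WithLp
open scoped InnerProductSpace

section Phase

variable {𝕜 E : Type*} [RCLike 𝕜] [NormedAddCommGroup E] [InnerProductSpace 𝕜 E]

theorem exists_norm_eq_one_norm_sub_smul_le {g u : E} (hg : ‖g‖ = 1) (hu : ‖u‖ = 1) :
    ∃ φ : 𝕜, ‖φ‖ = 1 ∧ ‖g - φ • u‖ ≤ √2 * ‖u - ⟪g, u⟫_𝕜 • g‖ := by
  set α := ⟪g, u⟫_𝕜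
  obtain ⟨φ, hφ, hφα⟩ := exists_norm_eq_mul_self α
  refine ⟨φ, hφ, ?_⟩
  have hα : ‖α‖ ≤ 1 := by simpa [hg, hu] using norm_inner_le_norm (𝕜 := 𝕜) g u
  have hleft : ‖g - φ • u‖ ^ 2 = 2 - 2 * ‖α‖ := by
    rw [@norm_sub_sq 𝕜, inner_smul_right, ← hφα, norm_smul, hφ, hg, hu, ofReal_re]
    ring
  have hright : ‖u - α • g‖ ^ 2 = 1 - ‖α‖ ^ 2 := by
    rw [@norm_sub_sq 𝕜, inner_smul_right, ← inner_conj_symm, RCLike.mul_conj, norm_smul, hg, hu]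
    norm_cast
    ring
  refine (pow_le_pow_iff_left₀ (norm_nonneg _) (by positivity) two_ne_zero).mp ?_
  rw [mul_pow, Real.sq_sqrt zero_le_two, hleft, hright]
  nlinarith [norm_nonneg α]

end Phase

namespace OrthonormalBasis

variable {𝕜 E ι : Type*} [RCLike 𝕜] [NormedAddCommGroup E] [InnerProductSpace 𝕜 E] [Fintype ι]

section Eigenbasis

variable {b : OrthonormalBasis ι 𝕜 E} {T : E →ₗ[𝕜] E} {lam : ι → ℝ}

theorem inner_apply_of_apply_eq_smul (hT : ∀ i, T (b i) = (lam i : 𝕜) • b i) (x : E) (i : ι) :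
    ⟪b i, T x⟫_𝕜 = lam i * ⟪b i, x⟫_𝕜 := by
  classical
  conv_lhs => rw [← b.sum_repr' x]
  simp [inner_sum, hT, inner_smul_right, orthonormal_iff_ite.mp b.orthonormal, mul_comm]

theorem re_inner_apply_self_eq_sum (hT : ∀ i, T (b i) = (lam i : 𝕜) • b i) (x : E) :
    re ⟪x, T x⟫_𝕜 = ∑ i, lam i * ‖⟪b i, x⟫_𝕜‖ ^ 2 := by
  rw [← b.sum_inner_mul_inner x (T x), map_sum]
  refine Finset.sum_congr rfl fun i _ => ?_
  rw [inner_apply_of_apply_eq_smul hT, ← inner_conj_symm x, mul_left_comm, RCLike.conj_mul]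
  norm_cast

theorem norm_apply_sub_smul_sq_eq_sum (hT : ∀ i, T (b i) = (lam i : 𝕜) • b i) (x : E) (μ : ℝ) :
    ‖T x - (μ : 𝕜) • x‖ ^ 2 = ∑ i, (lam i - μ) ^ 2 * ‖⟪b i, x⟫_𝕜‖ ^ 2 := by
  rw [← b.sum_sq_norm_inner_right]
  refine Finset.sum_congr rfl fun i _ => ?_
  rw [inner_sub_right, inner_smul_right, inner_apply_of_apply_eq_smul hT, ← sub_mul, norm_mul,
    mul_pow, ← ofReal_sub, norm_ofReal, sq_abs]

theorem inner_eq_zero_of_apply_eq_smul (hT : ∀ i, T (b i) = (lam i : 𝕜) • b i) {μ : ℝ} {g : E}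
    (hg : T g = (μ : 𝕜) • g) {j : ι} (hj : lam j ≠ μ) : ⟪b j, g⟫_𝕜 = 0 := by
  have h := inner_apply_of_apply_eq_smul hT g j
  rw [hg, inner_smul_right, ← sub_eq_zero, ← sub_mul, ← ofReal_sub, mul_eq_zero] at h
  exact h.resolve_left (by exact_mod_cast sub_ne_zero.mpr hj.symm)

theorem mul_norm_le_norm_apply_sub_smul (hT : ∀ i, T (b i) = (lam i : 𝕜) • b i) {i₀ : ι}
    {δ : ℝ} (hδ : 0 ≤ δ) (hgap : ∀ j ≠ i₀, lam i₀ + δ ≤ lam j) {x : E}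
    (hx : ⟪b i₀, x⟫_𝕜 = 0) : δ * ‖x‖ ≤ ‖T x - (lam i₀ : 𝕜) • x‖ := by
  refine (pow_le_pow_iff_left₀ (by positivity) (norm_nonneg _) two_ne_zero).mp ?_
  rw [norm_apply_sub_smul_sq_eq_sum hT, mul_pow, ← b.sum_sq_norm_inner_right, Finset.mul_sum]
  refine Finset.sum_le_sum fun j _ => ?_
  rcases eq_or_ne j i₀ with rfl | hj
  · simp [hx]
  · have := hgap j hj
    gcongr
    linarith

theorem mul_norm_sub_inner_smul_le (hT : ∀ i, T (b i) = (lam i : 𝕜) • b i) {i₀ : ι}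
    {δ : ℝ} (hδ : 0 < δ) (hgap : ∀ j ≠ i₀, lam i₀ + δ ≤ lam j) {g : E} (hg1 : ‖g‖ = 1)
    (hg : T g = (lam i₀ : 𝕜) • g) (u : E) :
    δ * ‖u - ⟪g, u⟫_𝕜 • g‖ ≤ ‖T u - (lam i₀ : 𝕜) • u‖ := by
  classical
  have hg_eq : g = ⟪b i₀, g⟫_𝕜 • b i₀ := by
    conv_lhs => rw [← b.sum_repr' g]
    refine Finset.sum_eq_single i₀ (fun j _ hj => ?_) (by simp)
    rw [inner_eq_zero_of_apply_eq_smul hT hg (by linarith [hgap j hj]), zero_smul]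
  have hg0 : ⟪b i₀, g⟫_𝕜 ≠ 0 := by
    intro h
    rw [hg_eq, h, zero_smul, norm_zero] at hg1
    exact zero_ne_one hg1
  set w := u - ⟪g, u⟫_𝕜 • g
  have hw : ⟪g, w⟫_𝕜 = 0 := by
    simp [w, inner_sub_right, inner_smul_right, inner_self_eq_norm_sq_to_K, hg1]
  have hw₀ : ⟪b i₀, w⟫_𝕜 = 0 := by
    rw [hg_eq, inner_smul_left, mul_eq_zero] at hw
    exact hw.resolve_left ((map_ne_zero _).mpr hg0)
  have hTw : T w - (lam i₀ : 𝕜) • w = T u - (lam i₀ : 𝕜) • u := by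
    simp only [w, map_sub, map_smul, hg, smul_sub, smul_smul, mul_comm]
    abel
  rw [← hTw]
  exact mul_norm_le_norm_apply_sub_smul hT hδ.le hgap hw₀

section Sorted

variable [LinearOrder ι]

theorem mul_norm_sq_le_re_inner_apply_self (hT : ∀ i, T (b i) = (lam i : 𝕜) • b i)
    (hlam : Monotone lam) {x : E} {k : ι} (hx : ∀ j < k, ⟪b j, x⟫_𝕜 = 0) :
    lam k * ‖x‖ ^ 2 ≤ re ⟪x, T x⟫_𝕜 := by
  rw [re_inner_apply_self_eq_sum hT, ← b.sum_sq_norm_inner_right, Finset.mul_sum]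
  refine Finset.sum_le_sum fun j _ => ?_
  rcases lt_or_ge j k with hj | hj
  · simp [hx j hj]
  · exact mul_le_mul_of_nonneg_right (hlam hj) (sq_nonneg _)

theorem re_inner_apply_self_le_mul_norm_sq (hT : ∀ i, T (b i) = (lam i : 𝕜) • b i)
    (hlam : Monotone lam) {x : E} {k : ι} (hx : ∀ j, k < j → ⟪b j, x⟫_𝕜 = 0) :
    re ⟪x, T x⟫_𝕜 ≤ lam k * ‖x‖ ^ 2 := by
  rw [re_inner_apply_self_eq_sum hT, ← b.sum_sq_norm_inner_right, Finset.mul_sum]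
  refine Finset.sum_le_sum fun j _ => ?_
  rcases lt_or_ge k j with hj | hj
  · simp [hx j hj]
  · exact mul_le_mul_of_nonneg_right (hlam hj) (sq_nonneg _)

end Sorted

end Eigenbasis

section Weyl

variable [LinearOrder ι]

theorem exists_ne_zero_inner_eq_zero (a b : OrthonormalBasis ι 𝕜 E) (k : ι) :
    ∃ x : E, x ≠ 0 ∧ (∀ j, k < j → ⟪a j, x⟫_𝕜 = 0) ∧ ∀ j < k, ⟪b j, x⟫_𝕜 = 0 := by
  let F : ({i // i ≤ k} → 𝕜) →ₗ[𝕜] {j // j < k} → 𝕜 :=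
    LinearMap.pi (fun j => innerₛₗ 𝕜 (b j)) ∘ₗ Fintype.linearCombination 𝕜 (fun i => a i)
  have hcard : Fintype.card {j // j < k} < Fintype.card {i // i ≤ k} :=
    Fintype.card_lt_of_injective_of_notMem (fun j => ⟨j.1, j.2.le⟩)
      (fun _ _ h => by simpa [Subtype.ext_iff] using h) (b := ⟨k, le_rfl⟩)
      (by rintro ⟨j, hj⟩; exact j.2.ne (by simpa [Subtype.ext_iff] using hj))
  obtain ⟨c, hc, hc0⟩ := Submodule.ne_bot_iff _ |>.mp <|
    LinearMap.ker_ne_bot_of_finrank_lt (f := F) (by simpa using hcard)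
  refine ⟨∑ i, c i • a i, fun h => hc0 ?_, fun j hj => ?_, fun j hj => ?_⟩
  · exact funext <| Fintype.linearIndependent_iff.mp
      (a.orthonormal.linearIndependent.comp _ Subtype.val_injective) c h
  · simp only [inner_sum, inner_smul_right, orthonormal_iff_ite.mp a.orthonormal]
    refine Finset.sum_eq_zero fun i _ => ?_
    rw [if_neg (i.2.trans_lt hj).ne', mul_zero]
  · simpa [F, Fintype.linearCombination_apply, inner_sum, inner_smul_right] using
      congrFun (LinearMap.mem_ker.mp hc) ⟨j, hj⟩

theorem eigenvalue_le_add_norm_sub {a b : OrthonormalBasis ι 𝕜 E} {A B : E →L[𝕜] E}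
    {lamA lamB : ι → ℝ} (hA : ∀ i, A (a i) = (lamA i : 𝕜) • a i)
    (hB : ∀ i, B (b i) = (lamB i : 𝕜) • b i) (hlamA : Monotone lamA) (hlamB : Monotone lamB)
    (k : ι) : lamB k ≤ lamA k + ‖A - B‖ := by
  obtain ⟨x, hx0, hxa, hxb⟩ := exists_ne_zero_inner_eq_zero a b k
  have hAB : re ⟪x, B x⟫_𝕜 ≤ re ⟪x, A x⟫_𝕜 + ‖A - B‖ * ‖x‖ ^ 2 := by
    calc re ⟪x, B x⟫_𝕜 = re ⟪x, A x⟫_𝕜 + re ⟪x, (B - A) x⟫_𝕜 := by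
          simp [inner_sub_right]
      _ ≤ re ⟪x, A x⟫_𝕜 + ‖x‖ * (‖B - A‖ * ‖x‖) := by
          gcongr
          exact (re_inner_le_norm x _).trans (by gcongr; exact (B - A).le_opNorm x)
      _ = re ⟪x, A x⟫_𝕜 + ‖A - B‖ * ‖x‖ ^ 2 := by rw [norm_sub_rev]; ring
  have hB' := mul_norm_sq_le_re_inner_apply_self (T := B.toLinearMap) hB hlamB hxb
  have hA' := re_inner_apply_self_le_mul_norm_sq (T := A.toLinearMap) hA hlamA hxa
  simp only [ContinuousLinearMap.coe_coe] at hA' hB'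
  refine le_of_mul_le_mul_right ?_ (by positivity : 0 < ‖x‖ ^ 2)
  linarith

theorem abs_eigenvalue_sub_le_norm_sub {a b : OrthonormalBasis ι 𝕜 E} {A B : E →L[𝕜] E}
    {lamA lamB : ι → ℝ} (hA : ∀ i, A (a i) = (lamA i : 𝕜) • a i)
    (hB : ∀ i, B (b i) = (lamB i : 𝕜) • b i) (hlamA : Monotone lamA) (hlamB : Monotone lamB)
    (k : ι) : |lamA k - lamB k| ≤ ‖A - B‖ := by
  have := eigenvalue_le_add_norm_sub hA hB hlamA hlamB k
  have := eigenvalue_le_add_norm_sub hB hA hlamB hlamA k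
  rw [norm_sub_rev] at this
  exact abs_sub_le_iff.mpr ⟨by linarith, by linarith⟩

end Weyl

section Perturbation

variable {b : OrthonormalBasis ι 𝕜 E} {T S : E →L[𝕜] E} {lam : ι → ℝ}

theorem exists_norm_eq_one_norm_sub_smul_le_of_gap (hT : ∀ i, T (b i) = (lam i : 𝕜) • b i)
    {i₀ : ι} {δ : ℝ} (hδ : 0 < δ) (hgap : ∀ j ≠ i₀, lam i₀ + δ ≤ lam j) {g : E} (hg1 : ‖g‖ = 1)
    (hg : T g = (lam i₀ : 𝕜) • g) {ε : ℝ} (hTS : ‖T - S‖ ≤ ε) {u : E} {μ : ℝ} (hu1 : ‖u‖ = 1)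
    (hu : S u = (μ : 𝕜) • u) (hμ : |μ - lam i₀| ≤ ε) :
    ∃ φ : 𝕜, ‖φ‖ = 1 ∧ ‖g - φ • u‖ ≤ 2 * √2 * ε / δ := by
  have hTu : ‖T u - (lam i₀ : 𝕜) • u‖ ≤ 2 * ε := by
    have hsplit : T u - (lam i₀ : 𝕜) • u = (T - S) u + ((μ - lam i₀ : ℝ) : 𝕜) • u := by
      simp only [FunLike.coe_sub, Pi.sub_apply, hu, ofReal_sub, sub_smul]
      abel
    calc ‖T u - (lam i₀ : 𝕜) • u‖ ≤ ‖(T - S) u‖ + ‖((μ - lam i₀ : ℝ) : 𝕜) • u‖ :=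
          hsplit ▸ norm_add_le _ _
      _ ≤ ‖T - S‖ * ‖u‖ + |μ - lam i₀| * ‖u‖ := by
          rw [norm_smul, norm_ofReal]
          gcongr
          exact (T - S).le_opNorm u
      _ ≤ 2 * ε := by rw [hu1]; linarith
  have hw := mul_norm_sub_inner_smul_le (T := T.toLinearMap) hT hδ hgap hg1 hg u
  obtain ⟨φ, hφ, hgu⟩ := exists_norm_eq_one_norm_sub_smul_le (𝕜 := 𝕜) hg1 hu1
  refine ⟨φ, hφ, hgu.trans ?_⟩
  have hw' : ‖u - ⟪g, u⟫_𝕜 • g‖ ≤ 2 * ε / δ := by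
    rw [le_div_iff₀ hδ]
    exact (mul_comm δ _ ▸ hw).trans hTu
  calc √2 * ‖u - ⟪g, u⟫_𝕜 • g‖ ≤ √2 * (2 * ε / δ) := by gcongr
    _ = 2 * √2 * ε / δ := by ring

end Perturbation

end OrthonormalBasis

section VecNorm

variable {m n : Type*} [Fintype m] [Fintype n]

theorem vecNorm_eq_norm_toLp (x : n → ℂ) : vecNorm x = ‖toLp 2 x‖ :=
  (EuclideanSpace.norm_eq _).symm

theorem star_dotProduct_eq_inner (x y : n → ℂ) : star x ⬝ᵥ y = ⟪toLp 2 x, toLp 2 y⟫_ℂ := by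
  rw [EuclideanSpace.inner_toLp_toLp, dotProduct_comm]

theorem vecNorm_eq_sqrt_re_star_dotProduct (x : n → ℂ) : vecNorm x = √(star x ⬝ᵥ x).re := by
  rw [vecNorm_eq_norm_toLp, @norm_eq_sqrt_re_inner ℂ, star_dotProduct_eq_inner]
  rfl

theorem vecNorm_smul (c : ℂ) (x : n → ℂ) : vecNorm (c • x) = ‖c‖ * vecNorm x := by
  rw [vecNorm_eq_norm_toLp, toLp_smul, norm_smul, vecNorm_eq_norm_toLp]

theorem vecNorm_eq_one_of_star_dotProduct_self {x : n → ℂ} (hx : star x ⬝ᵥ x = 1) :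
    vecNorm x = 1 := by
  simp [vecNorm_eq_sqrt_re_star_dotProduct, hx]

variable [DecidableEq n]

theorem vecNorm_mulVec_le (A : Matrix m n ℂ) (x : n → ℂ) :
    vecNorm (A *ᵥ x) ≤ opNorm A * vecNorm x := by
  rw [vecNorm_eq_norm_toLp, vecNorm_eq_norm_toLp]
  exact (LinearMap.toContinuousLinearMap (toEuclideanLin A)).le_opNorm (toLp 2 x)

variable {U : Matrix m n ℂ}

theorem star_mulVec_dotProduct_mulVec (hU : Uᴴ * U = 1) (x y : n → ℂ) :
    star (U *ᵥ x) ⬝ᵥ (U *ᵥ y) = star x ⬝ᵥ y := by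
  rw [star_mulVec, dotProduct_mulVec, vecMul_vecMul, hU, vecMul_one]

theorem vecNorm_mulVec (hU : Uᴴ * U = 1) (x : n → ℂ) : vecNorm (U *ᵥ x) = vecNorm x := by
  rw [vecNorm_eq_sqrt_re_star_dotProduct, vecNorm_eq_sqrt_re_star_dotProduct,
    star_mulVec_dotProduct_mulVec hU]

theorem vecNorm_mulVec_sub_mulVec_le (hU : Uᴴ * U = 1) {V : Matrix m n ℂ} {η : ℝ}
    (hVU : opNorm (V - U) ≤ η) {x : n → ℂ} (hx : vecNorm x = 1) (y : n → ℂ) :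
    vecNorm (V *ᵥ x - U *ᵥ y) ≤ η + vecNorm (x - y) := by
  have hsplit : V *ᵥ x - U *ᵥ y = (V - U) *ᵥ x + U *ᵥ (x - y) := by
    rw [sub_mulVec, mulVec_sub]
    abel
  calc vecNorm (V *ᵥ x - U *ᵥ y) = ‖toLp 2 ((V - U) *ᵥ x) + toLp 2 (U *ᵥ (x - y))‖ := by
        rw [hsplit, vecNorm_eq_norm_toLp, toLp_add]
    _ ≤ vecNorm ((V - U) *ᵥ x) + vecNorm (U *ᵥ (x - y)) := by
        simpa only [vecNorm_eq_norm_toLp] using norm_add_le _ _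
    _ ≤ opNorm (V - U) * vecNorm x + vecNorm (x - y) := by
        rw [vecNorm_mulVec hU]
        gcongr
        exact vecNorm_mulVec_le _ _
    _ ≤ η + vecNorm (x - y) := by rw [hx, mul_one]; gcongr

theorem conjTranspose_mul_mul_mulVec_eq_smul (hU : Uᴴ * U = 1) {A : Matrix m m ℂ} {x : n → ℂ}
    {μ : ℂ} (h : A *ᵥ (U *ᵥ x) = μ • U *ᵥ x) : (Uᴴ * A * U) *ᵥ x = μ • x := by
  rw [← mulVec_mulVec, ← mulVec_mulVec, h, mulVec_smul, mulVec_mulVec, hU, one_mulVec]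

end VecNorm

namespace IsSortedSpectrum

variable {n : ℕ} {A B H : Matrix (Fin n) (Fin n) ℂ} {lam lamA lamB : Fin n → ℝ}

theorem exists_orthonormalBasis (h : IsSortedSpectrum A lam) :
    ∃ b : OrthonormalBasis (Fin n) ℂ (EuclideanSpace ℂ (Fin n)),
      ∀ i, LinearMap.toContinuousLinearMap (toEuclideanLin A) (b i) = (lam i : ℂ) • b i := by
  obtain ⟨-, w, hw, hAw⟩ := h
  have hon : Orthonormal ℂ fun i => toLp 2 (w i) := by
    rw [orthonormal_iff_ite]
    intro i j
    rw [← star_dotProduct_eq_inner, hw]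
  refine ⟨.mk hon (hon.linearIndependent.span_eq_top_of_card_eq_finrank' (by simp)).ge,
    fun i => ?_⟩
  simp [OrthonormalBasis.coe_mk, toLpLin_toLp, hAw]

theorem abs_sub_le_opNorm (hA : IsSortedSpectrum A lamA) (hB : IsSortedSpectrum B lamB)
    (k : Fin n) : |lamA k - lamB k| ≤ opNorm (A - B) := by
  obtain ⟨a, ha⟩ := hA.exists_orthonormalBasis
  obtain ⟨b, hb⟩ := hB.exists_orthonormalBasis
  simpa [opNorm, map_sub] using OrthonormalBasis.abs_eigenvalue_sub_le_norm_sub ha hb hA.1 hB.1 k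

theorem unique_s3 (hA : IsSortedSpectrum A lamA) (hA' : IsSortedSpectrum A lamB) : lamA = lamB :=
  funext fun k => sub_eq_zero.mp <| abs_nonpos_iff.mp <| by
    simpa [opNorm] using hA.abs_sub_le_opNorm hA' k

theorem exists_norm_eq_one_vecNorm_sub_smul_le (hH : IsSortedSpectrum H lam) {i₀ : Fin n}
    {δ : ℝ} (hδ : 0 < δ) (hgap : ∀ j ≠ i₀, lam i₀ + δ ≤ lam j) {g : Fin n → ℂ}
    (hg1 : vecNorm g = 1) (hg : H *ᵥ g = (lam i₀ : ℂ) • g) {ε : ℝ} (hA : opNorm (H - A) ≤ ε)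
    {u : Fin n → ℂ} {μ : ℝ} (hu1 : vecNorm u = 1) (hu : A *ᵥ u = (μ : ℂ) • u)
    (hμ : |μ - lam i₀| ≤ ε) :
    ∃ φ : ℂ, ‖φ‖ = 1 ∧ vecNorm (g - φ • u) ≤ 2 * √2 * ε / δ := by
  obtain ⟨b, hb⟩ := hH.exists_orthonormalBasis
  rw [vecNorm_eq_norm_toLp] at hg1 hu1
  simpa [vecNorm_eq_norm_toLp] using
    b.exists_norm_eq_one_norm_sub_smul_le_of_gap hb hδ hgap hg1 (congrArg (toLp 2) hg)
      (S := LinearMap.toContinuousLinearMap (toEuclideanLin A))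
      (by simpa [opNorm, map_sub] using hA) hu1 (congrArg (toLp 2) hu) hμ

end IsSortedSpectrum

theorem isSortedSpectrum_conjTranspose_mul_mul_s3 {M N : ℕ} {U : Matrix (Fin M) (Fin N) ℂ}
    (hU : Uᴴ * U = 1) {A : Matrix (Fin M) (Fin M) ℂ} {lam : Fin N → ℝ} (hlam : Monotone lam)
    {z : Fin N → Fin N → ℂ}
    (hz : ∀ i j, star (U *ᵥ z i) ⬝ᵥ (U *ᵥ z j) = if i = j then 1 else 0)
    (hAz : ∀ i, A *ᵥ (U *ᵥ z i) = (lam i : ℂ) • U *ᵥ z i) :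
    IsSortedSpectrum (Uᴴ * A * U) lam :=
  ⟨hlam, z, fun i j => star_mulVec_dotProduct_mulVec hU (z i) (z j) ▸ hz i j,
    fun i => conjTranspose_mul_mul_mulVec_eq_smul hU (hAz i)⟩

/-- **Ground state simulation** (Lemma 3.2): there is an absolute constant `C > 0` such
that if `H` has a nondegenerate ground state `g` with spectral gap `δ` and `(Hsim, E)`
simulates `H` with error `(η, ε)` where `2ε < δ`, then `Hsim` has a nondegenerate ground
state `gsim` (for a suitable phase) with `‖E g - gsim‖ ≤ η + C ε / δ`. -/
theorem ground_state_simulation :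
    ∃ C : ℝ, 0 < C ∧
      ∀ {N M : ℕ} (hNM : N ≤ M) (hN : 2 ≤ N)
        (H : Matrix (Fin N) (Fin N) ℂ) (_hH : H.IsHermitian)
        (Hsim : Matrix (Fin M) (Fin M) ℂ) (_hsim : Hsim.IsHermitian)
        (E : Matrix (Fin M) (Fin N) ℂ) (_hE : Eᴴ * E = 1)
        (η ε δ : ℝ) (lamH : Fin N → ℝ)
        (_hlamH : IsSortedSpectrum H lamH)
        (g : Fin N → ℂ) (_hg : vecNorm g = 1)
        (_hground : H.mulVec g = (lamH ⟨0, by omega⟩ : ℂ) • g)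
        (_hgap : δ = lamH ⟨1, by omega⟩ - lamH ⟨0, by omega⟩)
        (_hδ : 0 < δ)
        (_hsimul : Simulates hNM Hsim E H η ε)
        (_hsmall : 2 * ε < δ)
        (lamS : Fin M → ℝ) (_hlamS : IsSortedSpectrum Hsim lamS),
        lamS ⟨0, by omega⟩ < lamS ⟨1, by omega⟩ ∧
        ∃ gsim : Fin M → ℂ, vecNorm gsim = 1 ∧
          Hsim.mulVec gsim = (lamS ⟨0, by omega⟩ : ℂ) • gsim ∧
          vecNorm (E.mulVec g - gsim) ≤ η + C * ε / δ := by
  refine ⟨2 * √2, by positivity, ?_⟩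
  intro N M hNM hN H _ Hsim _ E _ η ε δ lamH hlamH g hg hground hgap hδ hsimul hsmall lamS hlamS
  obtain ⟨lam, Et, v, hlam, hEt, hv, hveig, hrange, hS2, hS3⟩ := hsimul
  obtain rfl := hlamS.unique_s3 hlam
  choose z hz using fun i =>
    show v i ∈ LinearMap.range Et.mulVecLin from hrange ▸ Submodule.subset_span ⟨i, rfl⟩
  obtain rfl : v = fun i => Et *ᵥ z i := funext fun i => (hz i).symm
  have hcomp := isSortedSpectrum_conjTranspose_mul_mul_s3 hEt
    (hlamS.1.comp (Fin.strictMono_castLE hNM).monotone) hv hveig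
  have hweyl (k : Fin N) : |lamH k - lamS (Fin.castLE hNM k)| ≤ ε :=
    (hlamH.abs_sub_le_opNorm hcomp k).trans hS2
  have h0 := abs_le.mp (hweyl ⟨0, by omega⟩)
  have h1 := abs_le.mp (hweyl ⟨1, by omega⟩)
  simp only [Fin.castLE_mk] at h0 h1
  refine ⟨by linarith, ?_⟩
  have hgapH : ∀ j ≠ ⟨0, by omega⟩, lamH ⟨0, by omega⟩ + δ ≤ lamH j := fun j hj => by
    have := hlamH.1 (Fin.mk_le_of_le_val (Nat.one_le_iff_ne_zero.mpr (Fin.val_ne_iff.mpr hj)))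
    linarith
  have hv0 : vecNorm (Et *ᵥ z ⟨0, by omega⟩) = 1 :=
    vecNorm_eq_one_of_star_dotProduct_self (by simpa using hv ⟨0, by omega⟩ ⟨0, by omega⟩)
  obtain ⟨φ, hφ, hclose⟩ := hlamH.exists_norm_eq_one_vecNorm_sub_smul_le hδ hgapH hg hground hS2
    (vecNorm_mulVec hEt _ ▸ hv0) (conjTranspose_mul_mul_mulVec_eq_smul hEt (hveig _))
    (by rw [abs_sub_comm]; exact hweyl _)
  refine ⟨φ • Et *ᵥ z ⟨0, by omega⟩, by rw [vecNorm_smul, hφ, hv0, one_mul],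
    by rw [mulVec_smul, hveig, smul_comm]; rfl, ?_⟩
  rw [← mulVec_smul]
  linarith [vecNorm_mulVec_sub_mulVec_le hEt hS3 hg (φ • z ⟨0, by omega⟩)]
end

section
/- Let P and Q be orthogonal projections (Hermitian idempotent matrices) on ℂ^D with s := ‖P − Q‖ < 1, where ‖·‖ is the operator norm. Then there exists a unitary matrix U on ℂ^D such that U P U† = Q and ‖U − I‖ ≤ √2 · s. -/
/-!
For projections `p, q` put `x = q p + (1 - q)(1 - p)`. Then `x p = q x` and
`x⋆x = x x⋆ = 1 - (p - q)²`, where `(p - q)²` commutes with `p` and `q` and has norm `< 1`.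
So the unitary part `u = x (1 - (p - q)²)^(-1/2)` of `x` still conjugates `p` to `q`.
Moreover `u + u⋆ = 2 (1 - (p - q)²)^(1/2)`, hence `(u - 1)⋆(u - 1) = 2 (1 - √(1 - (p - q)²))`,
and `|1 - √(1 - t)| ≤ |t|` gives `‖u - 1‖² ≤ 2 ‖p - q‖²`.
-/

open Matrix

section Ring

variable {R : Type*} [Ring R] {p q k : R}

def projIntertwiner (p q : R) : R := q * p + (1 - q) * (1 - p)

lemma IsIdempotentElem.commute_sub_sq_left (hp : IsIdempotentElem p) (hq : IsIdempotentElem q) :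
    Commute p ((p - q) ^ 2) := by
  simp only [commute_iff_eq, sq, mul_sub, sub_mul, mul_assoc, hp.eq, hq.eq, hp.mul_self_mul]
  abel

lemma IsIdempotentElem.commute_sub_sq_right (hp : IsIdempotentElem p) (hq : IsIdempotentElem q) :
    Commute q ((p - q) ^ 2) := by
  rw [← neg_sub q p, neg_sq]
  exact hq.commute_sub_sq_left hp

lemma IsIdempotentElem.projIntertwiner_mul (hp : IsIdempotentElem p) (hq : IsIdempotentElem q) :
    projIntertwiner p q * p = q * projIntertwiner p q := by
  simp only [projIntertwiner, mul_sub, sub_mul, mul_add, add_mul, mul_one, one_mul, mul_assoc,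
    hp.eq, hq.eq, hq.mul_self_mul]
  abel

lemma IsIdempotentElem.projIntertwiner_mul_projIntertwiner (hp : IsIdempotentElem p)
    (hq : IsIdempotentElem q) :
    projIntertwiner q p * projIntertwiner p q = 1 - (p - q) ^ 2 := by
  simp only [projIntertwiner, sq, mul_sub, sub_mul, mul_add, add_mul, mul_one, one_mul,
    mul_assoc, hp.eq, hq.eq, hq.mul_self_mul]
  abel

lemma IsIdempotentElem.projIntertwiner_add_projIntertwiner (hp : IsIdempotentElem p)
    (hq : IsIdempotentElem q) :
    projIntertwiner p q + projIntertwiner q p = (1 - (p - q) ^ 2) + (1 - (p - q) ^ 2) := by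
  simp only [projIntertwiner, sq, mul_sub, sub_mul, mul_one, one_mul, hp.eq, hq.eq]
  abel

lemma Commute.projIntertwiner_right (hkp : Commute k p) (hkq : Commute k q) :
    Commute k (projIntertwiner p q) :=
  (hkq.mul_right hkp).add_right
    (((Commute.one_right k).sub_right hkq).mul_right ((Commute.one_right k).sub_right hkp))

end Ring

section StarRing

variable {R : Type*} [Ring R] [StarRing R] {p q k : R}

lemma IsStarProjection.star_projIntertwiner (hp : IsStarProjection p) (hq : IsStarProjection q) :
    star (projIntertwiner p q) = projIntertwiner q p := by
  simp [projIntertwiner, star_mul, hp.isSelfAdjoint.star_eq, hq.isSelfAdjoint.star_eq]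

lemma IsStarProjection.projIntertwiner_mul_mem_unitary (hp : IsStarProjection p)
    (hq : IsStarProjection q) (hk : IsSelfAdjoint k) (hkp : Commute k p) (hkq : Commute k q)
    (hk2 : (1 - (p - q) ^ 2) * k ^ 2 = 1) :
    projIntertwiner p q * k ∈ unitary R := by
  have hstar : star (projIntertwiner p q * k) = k * projIntertwiner q p := by
    rw [star_mul, hk.star_eq, hp.star_projIntertwiner hq]
  have hk' : Commute k (projIntertwiner q p) := hkq.projIntertwiner_right hkp
  have hka : Commute k (1 - (p - q) ^ 2) :=
    (Commute.one_right k).sub_right ((hkp.sub_right hkq).pow_right 2)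
  refine Unitary.mem_iff.2 ⟨?_, ?_⟩
  · rw [hstar, mul_assoc, ← mul_assoc _ _ k, ← mul_assoc,
      hp.isIdempotentElem.projIntertwiner_mul_projIntertwiner hq.isIdempotentElem, hka.eq,
      mul_assoc, ← sq, hk2]
  · rw [hstar, mul_assoc, ← mul_assoc k, (hk'.mul_left hk').eq, ← mul_assoc, ← sq,
      hq.isIdempotentElem.projIntertwiner_mul_projIntertwiner hp.isIdempotentElem,
      ← neg_sub p q, neg_sq, hk2]

lemma IsIdempotentElem.projIntertwiner_mul_mul_star (hp : IsIdempotentElem p)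
    (hq : IsIdempotentElem q) (hkp : Commute k p) (hu : projIntertwiner p q * k ∈ unitary R) :
    projIntertwiner p q * k * p * Star.star (projIntertwiner p q * k) = q := by
  rw [mul_assoc _ k, hkp.eq, ← mul_assoc, hp.projIntertwiner_mul hq, mul_assoc q, mul_assoc q,
    Unitary.mul_star_self_of_mem hu, mul_one]

lemma IsStarProjection.star_sub_one_mul_sub_one (hp : IsStarProjection p)
    (hq : IsStarProjection q) (hk : IsSelfAdjoint k) (hkp : Commute k p) (hkq : Commute k q)
    (hu : projIntertwiner p q * k ∈ unitary R) :
    star (projIntertwiner p q * k - 1) * (projIntertwiner p q * k - 1) =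
      (1 - (1 - (p - q) ^ 2) * k) + (1 - (1 - (p - q) ^ 2) * k) := by
  have hsum : projIntertwiner p q * k + star (projIntertwiner p q * k) =
      ((1 - (p - q) ^ 2) + (1 - (p - q) ^ 2)) * k := by
    rw [star_mul, hk.star_eq, hp.star_projIntertwiner hq, (hkq.projIntertwiner_right hkp).eq,
      ← add_mul, hp.isIdempotentElem.projIntertwiner_add_projIntertwiner hq.isIdempotentElem]
  have hexp : star (projIntertwiner p q * k - 1) * (projIntertwiner p q * k - 1) =
      1 + 1 - (projIntertwiner p q * k + star (projIntertwiner p q * k)) := by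
    rw [star_sub, star_one, sub_mul, mul_sub, mul_sub, Unitary.star_mul_self_of_mem hu]
    noncomm_ring
  rw [hexp, hsum, add_mul]
  abel

end StarRing

lemma abs_one_sub_sqrt_one_sub_le {z : ℝ} (hz : z ≤ 1) : |1 - √(1 - z)| ≤ |z| := by
  have hsq : √(1 - z) ^ 2 = 1 - z := Real.sq_sqrt (by linarith)
  have hpos : 0 < 1 + √(1 - z) := by linarith [Real.sqrt_nonneg (1 - z)]
  calc |1 - √(1 - z)| ≤ |1 - √(1 - z)| * (1 + √(1 - z)) :=
        le_mul_of_one_le_right (abs_nonneg _) (by linarith [Real.sqrt_nonneg (1 - z)])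
    _ = |(1 - √(1 - z)) * (1 + √(1 - z))| := by rw [abs_mul, abs_of_pos hpos]
    _ = |z| := by congr 1; linear_combination -hsq

lemma lt_one_of_mem_spectrum_of_norm_lt_one {A : Type*} [NormedRing A] [NormedAlgebra ℝ A]
    [CompleteSpace A] [NormOneClass A] {a : A} (h : ‖a‖ < 1) {z : ℝ} (hz : z ∈ spectrum ℝ a) :
    z < 1 :=
  (le_abs_self z).trans_lt <| (spectrum.norm_le_norm_of_mem hz).trans_lt h

lemma cfc_one_sub_id {A : Type*} [Ring A] [StarRing A] [Algebra ℝ A] [TopologicalSpace A]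
    [ContinuousFunctionalCalculus ℝ A IsSelfAdjoint] {a : A} (ha : IsSelfAdjoint a) :
    cfc (fun z : ℝ => 1 - z) a = 1 - a := by
  rw [cfc_sub (fun _ => (1 : ℝ)) (fun z => z) a, cfc_const_one ℝ a, cfc_id' ℝ a]

section CStarAlgebra

variable {A : Type*} [CStarAlgebra A]

lemma continuousOn_inv_sqrt_one_sub_spectrum [Nontrivial A] {a : A} (h : ‖a‖ < 1) :
    ContinuousOn (fun z : ℝ => (√(1 - z))⁻¹) (spectrum ℝ a) :=
  ContinuousOn.inv₀ (by fun_prop) fun z hz =>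
    (Real.sqrt_pos.2 (sub_pos.2 (lt_one_of_mem_spectrum_of_norm_lt_one h hz))).ne'

lemma IsSelfAdjoint.one_sub_mul_cfc_inv_sqrt_one_sub_sq [Nontrivial A] {a : A}
    (ha : IsSelfAdjoint a) (h : ‖a‖ < 1) :
    (1 - a) * cfc (fun z : ℝ => (√(1 - z))⁻¹) a ^ 2 = 1 := by
  have := continuousOn_inv_sqrt_one_sub_spectrum h
  rw [sq, ← cfc_mul _ _ a, ← cfc_one_sub_id ha, ← cfc_mul _ _ a]
  refine (cfc_congr fun z hz => ?_).trans (cfc_const_one ℝ a)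
  have hz' := sub_pos.2 (lt_one_of_mem_spectrum_of_norm_lt_one h hz)
  rw [← mul_inv, Real.mul_self_sqrt hz'.le, mul_inv_cancel₀ hz'.ne']

lemma IsSelfAdjoint.norm_one_sub_one_sub_mul_cfc_inv_sqrt_one_sub_le [Nontrivial A] {a : A}
    (ha : IsSelfAdjoint a) (h : ‖a‖ < 1) :
    ‖1 - (1 - a) * cfc (fun z : ℝ => (√(1 - z))⁻¹) a‖ ≤ ‖a‖ := by
  have := continuousOn_inv_sqrt_one_sub_spectrum h
  have hcfc : cfc (fun z : ℝ => 1 - √(1 - z)) a =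
      1 - (1 - a) * cfc (fun z : ℝ => (√(1 - z))⁻¹) a := by
    rw [cfc_sub (fun _ => (1 : ℝ)) _ a, cfc_const_one ℝ a, ← cfc_one_sub_id ha, ← cfc_mul _ _ a]
    exact congrArg _ (cfc_congr fun z _ => (Real.div_sqrt (x := 1 - z)).symm)
  rw [← hcfc]
  refine norm_cfc_le (norm_nonneg a) fun z hz => ?_
  rw [Real.norm_eq_abs]
  exact (abs_one_sub_sqrt_one_sub_le (lt_one_of_mem_spectrum_of_norm_lt_one h hz).le).trans
    (spectrum.norm_le_norm_of_mem hz)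

theorem IsStarProjection.exists_mem_unitary_mul_mul_star_eq {p q : A} (hp : IsStarProjection p)
    (hq : IsStarProjection q) (hpq : ‖p - q‖ < 1) :
    ∃ u ∈ unitary A, u * p * star u = q ∧ ‖u - 1‖ ≤ √2 * ‖p - q‖ := by
  nontriviality A
  have ha : IsSelfAdjoint ((p - q) ^ 2) := (hp.isSelfAdjoint.sub hq.isSelfAdjoint).pow 2
  have ha_le : ‖(p - q) ^ 2‖ ≤ ‖p - q‖ ^ 2 := norm_pow_le _ _
  have ha_lt : ‖(p - q) ^ 2‖ < 1 := ha_le.trans_lt (pow_lt_one₀ (norm_nonneg _) hpq two_ne_zero)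
  set k := cfc (fun z : ℝ => (√(1 - z))⁻¹) ((p - q) ^ 2)
  have hk : IsSelfAdjoint k := cfc_predicate _ _
  have hkp : Commute k p :=
    (hp.isIdempotentElem.commute_sub_sq_left hq.isIdempotentElem).symm.cfc_real _
  have hkq : Commute k q :=
    (hp.isIdempotentElem.commute_sub_sq_right hq.isIdempotentElem).symm.cfc_real _
  have hu := hp.projIntertwiner_mul_mem_unitary hq hk hkp hkq
    (ha.one_sub_mul_cfc_inv_sqrt_one_sub_sq ha_lt)
  refine ⟨_, hu, hp.isIdempotentElem.projIntertwiner_mul_mul_star hq.isIdempotentElem hkp hu, ?_⟩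
  have hsq : ‖projIntertwiner p q * k - 1‖ ^ 2 ≤ (√2 * ‖p - q‖) ^ 2 := by
    have hb := ha.norm_one_sub_one_sub_mul_cfc_inv_sqrt_one_sub_le ha_lt
    rw [sq, ← CStarRing.norm_star_mul_self, hp.star_sub_one_mul_sub_one hq hk hkp hkq hu,
      mul_pow, Real.sq_sqrt zero_le_two]
    linarith [norm_add_le_of_le hb hb]
  exact (pow_le_pow_iff_left₀ (norm_nonneg _) (by positivity) two_ne_zero).1 hsq

end CStarAlgebra

/-- If `P, Q` are orthogonal projections with `‖P - Q‖ < 1`, then there is a unitary `U`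
with `U P U† = Q` and `‖U - I‖ ≤ √2 ‖P - Q‖` (the Jordan's-lemma step inside the proof
of the composition lemma). -/
theorem unitary_conjugating_close_projections {D : ℕ}
    (P Q : Matrix (Fin D) (Fin D) ℂ)
    (hP : Pᴴ = P) (hP2 : P * P = P)
    (hQ : Qᴴ = Q) (hQ2 : Q * Q = Q)
    (hclose : opNorm (P - Q) < 1) :
    ∃ U : Matrix (Fin D) (Fin D) ℂ,
      Uᴴ * U = 1 ∧ U * Uᴴ = 1 ∧
      U * P * Uᴴ = Q ∧
      opNorm (U - 1) ≤ Real.sqrt 2 * opNorm (P - Q) := by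
  -- `opNorm` is definitionally the norm of this C⋆-algebra structure.
  let _ : CStarAlgebra (Matrix (Fin D) (Fin D) ℂ) := Matrix.instCStarAlgebra
  obtain ⟨U, hU, hconj, hnorm⟩ :=
    IsStarProjection.exists_mem_unitary_mul_mul_star_eq ⟨hP2, hP⟩ ⟨hQ2, hQ⟩ hclose
  exact ⟨U, Unitary.star_mul_self_of_mem hU, Unitary.mul_star_self_of_mem hU, hconj, hnorm⟩
end

section
/- Let G = (U, E) be a finite simple triangle-free graph and let Γ > 2|E| be a real number. For a subset S ⊆ U define E_Γ(S) = |S| − 2·e(S) + Γ·p₂(S), where e(S) is the number of edges of G with both endpoints in S and p₂(S) is the number of unordered pairs {u, v} ⊆ S at graph distance exactly 2. Then: (i) E_Γ(S) ≥ 0 for every S ⊆ U; (ii) E_Γ(S) = 0 if and only if S is an m-dimer for some integer m ≥ 0; and (iii) if S is an m-dimer and u ∈ S, then E_Γ(S \ {u}) = 1. -/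
open Finset

/-- The energy `E_Γ(S) = |S| - 2 e(S) + Γ p₂(S)` of a particle configuration `S`,
where `2 e(S)` is the number of ordered adjacent pairs inside `S` and `2 p₂(S)` is the
number of ordered pairs inside `S` at graph distance exactly `2`. -/
noncomputable def dimerEnergy {V : Type*} [Fintype V] [DecidableEq V]
    (G : SimpleGraph V) [DecidableRel G.Adj] (Γ : ℝ) (S : Finset V) : ℝ :=
  (S.card : ℝ)
    - ((Finset.univ.filter
        (fun p : V × V => p.1 ∈ S ∧ p.2 ∈ S ∧ G.Adj p.1 p.2)).card : ℝ)
    + Γ * ((Finset.univ.filter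
        (fun p : V × V => p.1 ∈ S ∧ p.2 ∈ S ∧ p.1 ≠ p.2 ∧ ¬G.Adj p.1 p.2 ∧
          ∃ w, G.Adj p.1 w ∧ G.Adj w p.2)).card : ℝ) / 2

/-- `S` is an `m`-dimer: a disjoint union of `m` dimers (edges) pairwise at graph
distance at least `3` (all vertices distinct, non-adjacent, with no common neighbor). -/
def IsMDimer {V : Type*} (G : SimpleGraph V) (m : ℕ) (S : Finset V) : Prop :=
  ∃ P : Finset (V × V),
    P.card = m ∧
    (∀ p ∈ P, G.Adj p.1 p.2) ∧
    (∀ x, x ∈ S ↔ ∃ p ∈ P, x = p.1 ∨ x = p.2) ∧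
    ∀ p ∈ P, ∀ q ∈ P, p ≠ q →
      ∀ u, (u = p.1 ∨ u = p.2) → ∀ v, (v = q.1 ∨ v = q.2) →
        u ≠ v ∧ ¬G.Adj u v ∧ ¬∃ w, G.Adj u w ∧ G.Adj w v

section Aux

variable {V : Type*} [Fintype V] [DecidableEq V] {G : SimpleGraph V} [DecidableRel G.Adj]

/-- No two vertices of `S` are at graph distance exactly 2. -/
def DimerGood (G : SimpleGraph V) (S : Finset V) : Prop :=
  ∀ u ∈ S, ∀ v ∈ S, u ≠ v → ¬G.Adj u v → ¬∃ w, G.Adj u w ∧ G.Adj w v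

lemma d2filter_empty {S : Finset V} (h : DimerGood G S) :
    (Finset.univ.filter
        (fun p : V × V => p.1 ∈ S ∧ p.2 ∈ S ∧ p.1 ≠ p.2 ∧ ¬G.Adj p.1 p.2 ∧
          ∃ w, G.Adj p.1 w ∧ G.Adj w p.2)) = ∅ := by
  ext p
  simp only [mem_filter, mem_univ, true_and, notMem_empty, iff_false]
  rintro ⟨h1, h2, h3, h4, h5⟩
  exact h _ h1 _ h2 h3 h4 h5

lemma adjfilter_card (S : Finset V) :
    (Finset.univ.filter
        (fun p : V × V => p.1 ∈ S ∧ p.2 ∈ S ∧ G.Adj p.1 p.2)).card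
      = ∑ u ∈ S, (S.filter (G.Adj u)).card := by
  rw [Finset.card_eq_sum_card_fiberwise
      (f := Prod.fst) (t := S) (fun p hp => (mem_filter.mp hp).2.1)]
  refine Finset.sum_congr rfl fun u hu => ?_
  apply Finset.card_bij (fun p _ => p.2)
  · intro p hp
    simp only [mem_filter, mem_univ, true_and] at hp
    simp only [mem_filter]
    exact ⟨hp.1.2.1, hp.2 ▸ hp.1.2.2⟩
  · intro p hp q hq h
    simp only [mem_filter, mem_univ, true_and] at hp hq
    exact Prod.ext (hp.2.trans hq.2.symm) h
  · intro v hv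
    simp only [mem_filter] at hv
    exact ⟨(u, v), by simp [mem_filter, hu, hv.1, hv.2], rfl⟩

lemma energy_good {S : Finset V} (Γ : ℝ) (h : DimerGood G S) :
    dimerEnergy G Γ S
      = (S.card : ℝ) - ((∑ u ∈ S, (S.filter (G.Adj u)).card : ℕ) : ℝ) := by
  unfold dimerEnergy
  rw [d2filter_empty h, adjfilter_card]
  simp

lemma deg_le_one (htf : G.CliqueFree 3) {S : Finset V} (h : DimerGood G S)
    {u : V} (hu : u ∈ S) : (S.filter (G.Adj u)).card ≤ 1 := by
  rw [Finset.card_le_one]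
  intro v hv w hw
  by_contra hvw
  rw [mem_filter] at hv hw
  have hnadj : ¬G.Adj v w := fun hadj =>
    htf {u, v, w} (SimpleGraph.is3Clique_triple_iff.mpr ⟨hv.2, hw.2, hadj⟩)
  exact h v hv.1 w hw.1 hvw hnadj ⟨u, hv.2.symm, hw.2⟩

/-- m-dimers have no distance-2 pairs. -/
lemma dimer_good {m : ℕ} {S : Finset V} (hd : IsMDimer G m S) : DimerGood G S := by
  obtain ⟨P, -, hadj, hcov, hsep⟩ := hd
  intro u hu v hv huv hnadj hw
  obtain ⟨p, hp, hu'⟩ := (hcov u).mp hu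
  obtain ⟨q, hq, hv'⟩ := (hcov v).mp hv
  by_cases hpq : p = q
  · subst hpq
    rcases hu' with rfl | rfl <;> rcases hv' with rfl | rfl
    · exact huv rfl
    · exact hnadj (hadj p hp)
    · exact hnadj (hadj p hp).symm
    · exact huv rfl
  · exact (hsep p hp q hq hpq u hu' v hv').2.2 hw

/-- every vertex of an m-dimer has exactly one neighbor in S. -/
lemma dimer_deg_one {m : ℕ} {S : Finset V} (hd : IsMDimer G m S)
    {u : V} (hu : u ∈ S) : (S.filter (G.Adj u)).card = 1 := by
  obtain ⟨P, -, hadj, hcov, hsep⟩ := hd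
  have hmemS : ∀ p ∈ P, p.1 ∈ S ∧ p.2 ∈ S := fun p hp =>
    ⟨(hcov p.1).mpr ⟨p, hp, Or.inl rfl⟩, (hcov p.2).mpr ⟨p, hp, Or.inr rfl⟩⟩
  obtain ⟨p, hp, hu'⟩ := (hcov u).mp hu
  have key : ∀ y, (y = p.2 ∧ u = p.1) ∨ (y = p.1 ∧ u = p.2) →
      S.filter (G.Adj u) = {y} := by
    rintro y hy
    ext v
    simp only [mem_filter, mem_singleton]
    constructor
    · rintro ⟨hvS, hadjv⟩
      obtain ⟨q, hq, hv'⟩ := (hcov v).mp hvS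
      by_cases hpq : p = q
      · subst hpq
        rcases hy with ⟨rfl, rfl⟩ | ⟨rfl, rfl⟩ <;> rcases hv' with rfl | rfl
        · exact absurd hadjv (G.irrefl)
        · rfl
        · rfl
        · exact absurd hadjv (G.irrefl)
      · exact absurd hadjv (hsep p hp q hq hpq u hu' v hv').2.1
    · rintro rfl
      rcases hy with ⟨rfl, rfl⟩ | ⟨rfl, rfl⟩
      · exact ⟨(hmemS p hp).2, hadj p hp⟩
      · exact ⟨(hmemS p hp).1, (hadj p hp).symm⟩
  rcases hu' with hu' | hu'
  · rw [key p.2 (Or.inl ⟨rfl, hu'⟩)]; exact card_singleton _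
  · rw [key p.1 (Or.inr ⟨rfl, hu'⟩)]; exact card_singleton _

end Aux

/-- For a triangle-free graph and `Γ > 2|E|`: the energy `E_Γ` is nonnegative, its zero
set consists exactly of the `m`-dimers, and removing one vertex from an `m`-dimer
yields a configuration of energy exactly `1` (Lemma 6.1). -/
theorem dimer_ground_states {V : Type*} [Fintype V] [DecidableEq V]
    (G : SimpleGraph V) [DecidableRel G.Adj]
    (htf : G.CliqueFree 3) (Γ : ℝ) (hΓ : 2 * (G.edgeFinset.card : ℝ) < Γ) :
    (∀ S : Finset V, 0 ≤ dimerEnergy G Γ S) ∧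
    (∀ S : Finset V, dimerEnergy G Γ S = 0 ↔ ∃ m : ℕ, IsMDimer G m S) ∧
    (∀ (m : ℕ) (S : Finset V), IsMDimer G m S →
      ∀ u ∈ S, dimerEnergy G Γ (S.erase u) = 1) := by
  -- the number of ordered adjacent pairs inside any S is at most 2|E|
  have hA_le : ∀ S : Finset V,
      (Finset.univ.filter
        (fun p : V × V => p.1 ∈ S ∧ p.2 ∈ S ∧ G.Adj p.1 p.2)).card
        ≤ 2 * G.edgeFinset.card := by
    intro S
    calc (Finset.univ.filter
          (fun p : V × V => p.1 ∈ S ∧ p.2 ∈ S ∧ G.Adj p.1 p.2)).card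
        ≤ (Finset.univ.filter
          (fun p : V × V => p.1 ∈ (univ : Finset V) ∧ p.2 ∈ (univ : Finset V)
            ∧ G.Adj p.1 p.2)).card := by
          apply card_le_card
          intro p hp
          simp only [mem_filter, mem_univ, true_and] at *
          exact hp.2.2
      _ = ∑ u ∈ (univ : Finset V), ((univ : Finset V).filter (G.Adj u)).card :=
          adjfilter_card _
      _ = ∑ u, G.degree u := by
          refine Finset.sum_congr rfl fun u _ => ?_
          rw [← SimpleGraph.card_neighborFinset_eq_degree]
          congr 1
          ext v
          simp [SimpleGraph.mem_neighborFinset]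
      _ = 2 * G.edgeFinset.card := G.sum_degrees_eq_twice_card_edges
  -- positive energy when some pair of S is at distance 2
  have hpos : ∀ S : Finset V, ¬ DimerGood G S → 0 < dimerEnergy G Γ S := by
    intro S hbad
    unfold DimerGood at hbad
    push_neg at hbad
    obtain ⟨u, hu, v, hv, huv, hnadj, hw⟩ := hbad
    unfold dimerEnergy
    set D := (Finset.univ.filter
        (fun p : V × V => p.1 ∈ S ∧ p.2 ∈ S ∧ p.1 ≠ p.2 ∧ ¬G.Adj p.1 p.2 ∧
          ∃ w, G.Adj p.1 w ∧ G.Adj w p.2)) with hD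
    set A := (Finset.univ.filter
        (fun p : V × V => p.1 ∈ S ∧ p.2 ∈ S ∧ G.Adj p.1 p.2)) with hA
    have h2 : 2 ≤ D.card := by
      have hsub : ({(u,v), (v,u)} : Finset (V × V)) ⊆ D := by
        intro p hp
        simp only [mem_insert, mem_singleton] at hp
        rcases hp with rfl | rfl <;>
          simp only [hD, mem_filter, mem_univ, true_and]
        · exact ⟨hu, hv, huv, hnadj, hw⟩
        · obtain ⟨w, hw1, hw2⟩ := hw
          exact ⟨hv, hu, huv.symm, fun h => hnadj h.symm, w, hw2.symm, hw1.symm⟩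
      have hne : ((u,v) : V × V) ≠ (v,u) := fun h => huv (Prod.ext_iff.mp h).1
      calc 2 = ({(u,v), (v,u)} : Finset (V × V)).card := (Finset.card_pair hne).symm
        _ ≤ D.card := card_le_card hsub
    have hΓ0 : (0 : ℝ) < Γ := lt_of_le_of_lt (by positivity) hΓ
    have hA' : (A.card : ℝ) ≤ 2 * (G.edgeFinset.card : ℝ) := by
      exact_mod_cast hA_le S
    have h2' : (2 : ℝ) ≤ (D.card : ℝ) := by exact_mod_cast h2
    have hc : (0 : ℝ) ≤ (S.card : ℝ) := Nat.cast_nonneg _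
    nlinarith [mul_le_mul_of_nonneg_left h2' hΓ0.le]
  -- nonnegativity
  have hnonneg : ∀ S : Finset V, 0 ≤ dimerEnergy G Γ S := by
    intro S
    by_cases hg : DimerGood G S
    · rw [energy_good Γ hg]
      have hle : ∑ u ∈ S, (S.filter (G.Adj u)).card ≤ S.card := by
        calc ∑ u ∈ S, (S.filter (G.Adj u)).card
            ≤ ∑ _u ∈ S, 1 := Finset.sum_le_sum fun u hu => deg_le_one htf hg hu
          _ = S.card := by simp
      have := (Nat.cast_le (α := ℝ)).mpr hle
      linarith
    · exact (hpos S hg).le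
  refine ⟨hnonneg, fun S => ⟨?_, ?_⟩, ?_⟩
  · -- zero energy implies m-dimer
    intro hE
    have hg : DimerGood G S := by
      by_contra hbad
      exact absurd hE (ne_of_gt (hpos S hbad))
    rw [energy_good Γ hg] at hE
    have hsum : ∑ u ∈ S, (S.filter (G.Adj u)).card = S.card := by
      have h := sub_eq_zero.mp hE
      exact_mod_cast h.symm
    have hdeg1 : ∀ u ∈ S, (S.filter (G.Adj u)).card = 1 := by
      have h1 : ∑ u ∈ S, (S.filter (G.Adj u)).card = ∑ _u ∈ S, 1 := by
        rw [hsum]; simp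
      exact fun u hu => (Finset.sum_eq_sum_iff_of_le
        (fun u hu => deg_le_one htf hg hu)).mp h1 u hu
    have hpart : ∀ u ∈ S, ∀ v ∈ S, ∀ w ∈ S, G.Adj u v → G.Adj u w → v = w :=
      fun u hu v hv w hw h1 h2 => Finset.card_le_one.mp (le_of_eq (hdeg1 u hu))
        v (mem_filter.mpr ⟨hv, h1⟩) w (mem_filter.mpr ⟨hw, h2⟩)
    set f : V → ℕ := fun v => ((Fintype.equivFin V) v : ℕ) with hfdef
    have hf : Function.Injective f :=
      fun a b h => (Fintype.equivFin V).injective (Fin.val_injective h)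
    set P := (S ×ˢ S).filter (fun p : V × V => G.Adj p.1 p.2 ∧ f p.1 < f p.2) with hPdef
    have hmemP : ∀ p ∈ P, p.1 ∈ S ∧ p.2 ∈ S ∧ G.Adj p.1 p.2 ∧ f p.1 < f p.2 := by
      intro p hp
      simp only [hPdef, mem_filter, mem_product] at hp
      exact ⟨hp.1.1, hp.1.2, hp.2.1, hp.2.2⟩
    have hScov : ∀ x ∈ S, ∃ p ∈ P, x = p.1 ∨ x = p.2 := by
      intro x hx
      obtain ⟨y, hy⟩ := Finset.card_eq_one.mp (hdeg1 x hx)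
      have hymem : y ∈ S.filter (G.Adj x) := hy ▸ mem_singleton_self y
      rw [mem_filter] at hymem
      have hxy : x ≠ y := G.ne_of_adj hymem.2
      rcases lt_or_gt_of_ne (fun h => hxy (hf h)) with h | h
      · exact ⟨(x,y), mem_filter.mpr ⟨mem_product.mpr ⟨hx, hymem.1⟩, hymem.2, h⟩,
          Or.inl rfl⟩
      · exact ⟨(y,x), mem_filter.mpr ⟨mem_product.mpr ⟨hymem.1, hx⟩, hymem.2.symm, h⟩,
          Or.inr rfl⟩
    have huniq : ∀ p ∈ P, ∀ q ∈ P, ∀ x, (x = p.1 ∨ x = p.2) →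
        (x = q.1 ∨ x = q.2) → p = q := by
      intro p hp q hq x hxp hxq
      obtain ⟨hp1, hp2, hpa, hpf⟩ := hmemP p hp
      obtain ⟨hq1, hq2, hqa, hqf⟩ := hmemP q hq
      rcases hxp with rfl | rfl <;> rcases hxq with h | h
      · have h2 : p.2 = q.2 := hpart p.1 hp1 p.2 hp2 q.2 hq2 hpa (by rw [h]; exact hqa)
        exact Prod.ext h h2
      · have h2 : p.2 = q.1 :=
          hpart p.1 hp1 p.2 hp2 q.1 hq1 hpa (by rw [h]; exact hqa.symm)
        exfalso; rw [h, h2] at hpf; omega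
      · have h2 : p.1 = q.2 :=
          hpart p.2 hp2 p.1 hp1 q.2 hq2 hpa.symm (by rw [h]; exact hqa)
        exfalso; rw [h, h2] at hpf; omega
      · have h2 : p.1 = q.1 :=
          hpart p.2 hp2 p.1 hp1 q.1 hq1 hpa.symm (by rw [h]; exact hqa.symm)
        exact Prod.ext h2 h
    refine ⟨P.card, P, rfl, fun p hp => (hmemP p hp).2.2.1,
      fun x => ⟨hScov x, ?_⟩, ?_⟩
    · rintro ⟨p, hp, rfl | rfl⟩
      exacts [(hmemP p hp).1, (hmemP p hp).2.1]
    · intro p hp q hq hpq u hu v hv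
      have huS : u ∈ S := by
        rcases hu with rfl | rfl
        exacts [(hmemP p hp).1, (hmemP p hp).2.1]
      have hvS : v ∈ S := by
        rcases hv with rfl | rfl
        exacts [(hmemP q hq).1, (hmemP q hq).2.1]
      have huv : u ≠ v := fun h => hpq (huniq p hp q hq u hu (h ▸ hv))
      have hnadj : ¬G.Adj u v := by
        intro hadj
        have hvp : v = p.1 ∨ v = p.2 := by
          rcases hu with rfl | rfl
          · exact Or.inr
              (hpart p.1 huS v hvS p.2 (hmemP p hp).2.1 hadj (hmemP p hp).2.2.1)
          · exact Or.inl
              (hpart p.2 huS v hvS p.1 (hmemP p hp).1 hadj (hmemP p hp).2.2.1.symm)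
        exact hpq (huniq p hp q hq v hvp hv)
      exact ⟨huv, hnadj, hg u huS v hvS huv hnadj⟩
  · -- m-dimer implies zero energy
    rintro ⟨m, hd⟩
    have hg := dimer_good hd
    rw [energy_good Γ hg]
    have hsum : ∑ u ∈ S, (S.filter (G.Adj u)).card = S.card := by
      rw [Finset.sum_congr rfl fun u hu => dimer_deg_one hd hu]
      simp
    rw [hsum]
    ring
  · -- removing a vertex from an m-dimer gives energy 1
    intro m S hd u hu
    have hg := dimer_good hd
    have hg' : DimerGood G (S.erase u) := fun a ha b hb =>
      hg a (mem_of_mem_erase ha) b (mem_of_mem_erase hb)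
    obtain ⟨y, hy⟩ := Finset.card_eq_one.mp (dimer_deg_one hd hu)
    have hymem : y ∈ S.filter (G.Adj u) := hy ▸ mem_singleton_self y
    rw [mem_filter] at hymem
    have hyu : y ≠ u := fun h => G.irrefl (h ▸ hymem.2)
    have hyS' : y ∈ S.erase u := mem_erase.mpr ⟨hyu, hymem.1⟩
    have hdeg : ∀ v ∈ S.erase u,
        ((S.erase u).filter (G.Adj v)).card = if v = y then 0 else 1 := by
      intro v hv
      have hvS := mem_of_mem_erase hv
      obtain ⟨z, hz⟩ := Finset.card_eq_one.mp (dimer_deg_one hd hvS)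
      have hzmem : z ∈ S.filter (G.Adj v) := hz ▸ mem_singleton_self z
      rw [mem_filter] at hzmem
      rw [Finset.filter_erase, hz]
      by_cases hvy : v = y
      · subst hvy
        have hzu : z = u := by
          have hmem : u ∈ S.filter (G.Adj v) := mem_filter.mpr ⟨hu, hymem.2.symm⟩
          rw [hz, mem_singleton] at hmem
          exact hmem.symm
        subst hzu
        simp
      · have hzu : z ≠ u := by
          intro h
          apply hvy
          have hmem : v ∈ S.filter (G.Adj u) :=
            mem_filter.mpr ⟨hvS, (h ▸ hzmem.2).symm⟩
          rw [hy, mem_singleton] at hmem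
          exact hmem
        rw [Finset.erase_eq_of_notMem (by simp [Ne.symm hzu])]
        simp [hvy]
    rw [energy_good Γ hg']
    have hsum : ∑ v ∈ S.erase u, ((S.erase u).filter (G.Adj v)).card
        = (S.erase u).card - 1 := by
      rw [Finset.sum_congr rfl hdeg]
      rw [← Finset.sum_erase_add _ _ hyS', if_pos rfl, add_zero]
      rw [Finset.sum_congr rfl fun v hv => if_neg (mem_erase.mp hv).1]
      rw [Finset.sum_const, smul_eq_mul, mul_one, Finset.card_erase_of_mem hyS']
    rw [hsum]
    have h1 : 1 ≤ (S.erase u).card := Finset.card_pos.mpr ⟨y, hyS'⟩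
    rw [Nat.cast_sub h1]
    push_cast
    ring
end
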